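/- arXiv:1812.11269 — 6 statements merged into one kernel-verified Lean document; each statement's English description precedes it below -/
import Mathlib

section
/- Let (φ₀, φ₁) be probability densities on a measure space with the same support, differing on a set of positive measure, with both Kullback–Leibler divergences KL(φ₀‖φ₁) and KL(φ₁‖φ₀) finite. Let α* = argmax_{α∈(0,1)} D_α(φ₀‖φ₁), let φ_{α*} = φ₀^{1−α*} φ₁^{α*} e^{D_{α*}(φ₀‖φ₁)} be the tilted density, and let l = φ₀/φ₁. Then E_{Y∼φ_{α*}}[log l(Y)] = 0. -/
/-!
Write `Z(α) = ∫ φ₀^{1-α} φ₁^α`. By weighted AM–GM the integrand is at most `φ₀ + φ₁`, and its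
`α`-derivative `φ₀^{1-α} φ₁^α log(φ₁/φ₀)` is dominated by `(φ₀ + φ₁) |log(φ₀/φ₁)|`, which is
integrable exactly because both KL divergences are finite. Hence `Z` is differentiable on `(0,1)`
with `Z'(α) = ∫ φ₀^{1-α} φ₁^α log(φ₁/φ₀)`. At the interior maximizer `α*` of `-log Z` the derivative
`-Z'(α*)/Z(α*)` vanishes, and this quotient is exactly the claimed expectation.
-/

open MeasureTheory Real
open Set

theorem rpow_one_sub_mul_rpow_le_add {a b β : ℝ} (ha : 0 ≤ a) (hb : 0 ≤ b)
    (hβ : β ∈ Icc (0 : ℝ) 1) :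
    a ^ (1 - β) * b ^ β ≤ a + b := by
  have h := geom_mean_le_arith_mean2_weighted (sub_nonneg.2 hβ.2) hβ.1 ha hb (sub_add_cancel 1 β)
  nlinarith [hβ.1, hβ.2]

theorem hasDerivAt_rpow_one_sub_mul_rpow {a b β : ℝ} (ha : 0 ≤ a) (hb : 0 ≤ b)
    (hβ : β ∈ Ioo (0 : ℝ) 1) :
    HasDerivAt (fun γ ↦ a ^ (1 - γ) * b ^ γ) (a ^ (1 - β) * b ^ β * log (b / a)) β := by
  rcases ha.eq_or_lt with rfl | ha
  · have hzero : ∀ γ ∈ Ioo (0 : ℝ) 1, (0 : ℝ) ^ (1 - γ) * b ^ γ = 0 := fun γ hγ ↦ by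
      rw [zero_rpow (sub_ne_zero.2 hγ.2.ne'), zero_mul]
    rw [hzero β hβ, zero_mul]
    exact (hasDerivAt_const β 0).congr_of_eventuallyEq
      (Filter.eventually_of_mem (isOpen_Ioo.mem_nhds hβ) hzero)
  rcases hb.eq_or_lt with rfl | hb
  · have hzero : ∀ γ ∈ Ioo (0 : ℝ) 1, a ^ (1 - γ) * (0 : ℝ) ^ γ = 0 := fun γ hγ ↦ by
      rw [zero_rpow hγ.1.ne', mul_zero]
    rw [hzero β hβ, zero_mul]
    exact (hasDerivAt_const β 0).congr_of_eventuallyEq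
      (Filter.eventually_of_mem (isOpen_Ioo.mem_nhds hβ) hzero)
  have hexp : ∀ γ, a ^ (1 - γ) * b ^ γ = exp (log a * (1 - γ) + log b * γ) := fun γ ↦ by
    rw [rpow_def_of_pos ha, rpow_def_of_pos hb, exp_add]
  simp only [hexp]
  refine ((((hasDerivAt_id β).const_sub 1).const_mul (log a)).add
    ((hasDerivAt_id β).const_mul (log b))).exp.congr_deriv ?_
  rw [log_div hb.ne' ha.ne']
  simp only [Pi.add_apply, id]
  ring

section

variable {Ω : Type*} [MeasurableSpace Ω] {μ : Measure Ω} {f g : Ω → ℝ}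

theorem MeasureTheory.Integrable.rpow_one_sub_mul_rpow (hf : Integrable f μ)
    (hg : Integrable g μ) (hf0 : ∀ x, 0 ≤ f x) (hg0 : ∀ x, 0 ≤ g x) {β : ℝ}
    (hβ : β ∈ Icc (0 : ℝ) 1) :
    Integrable (fun x ↦ f x ^ (1 - β) * g x ^ β) μ := by
  refine (hf.add hg).mono
    ((hf.aemeasurable.pow_const _).mul (hg.aemeasurable.pow_const _)).aestronglyMeasurable
    (Filter.Eventually.of_forall fun x ↦ ?_)
  have hf0x := hf0 x
  have hg0x := hg0 x
  rw [norm_of_nonneg (by positivity), Pi.add_apply, norm_of_nonneg (by positivity)]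
  exact rpow_one_sub_mul_rpow_le_add hf0x hg0x hβ

theorem integrable_add_mul_abs_log_div (hf0 : ∀ x, 0 ≤ f x) (hg0 : ∀ x, 0 ≤ g x)
    (hfg : Integrable (fun x ↦ f x * log (f x / g x)) μ)
    (hgf : Integrable (fun x ↦ g x * log (g x / f x)) μ) :
    Integrable (fun x ↦ (f x + g x) * |log (g x / f x)|) μ := by
  refine (hfg.abs.add hgf.abs).congr (Filter.Eventually.of_forall fun x ↦ ?_)
  have hlog : log (f x / g x) = -log (g x / f x) := by rw [← inv_div, log_inv]
  show |f x * log (f x / g x)| + |g x * log (g x / f x)| = _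
  rw [hlog, abs_mul, abs_mul, abs_neg, abs_of_nonneg (hf0 x), abs_of_nonneg (hg0 x)]
  exact (add_mul _ _ _).symm

theorem hasDerivAt_integral_rpow_one_sub_mul_rpow (hf : Integrable f μ) (hg : Integrable g μ)
    (hf0 : ∀ x, 0 ≤ f x) (hg0 : ∀ x, 0 ≤ g x)
    (hfg : Integrable (fun x ↦ f x * log (f x / g x)) μ)
    (hgf : Integrable (fun x ↦ g x * log (g x / f x)) μ) {α : ℝ} (hα : α ∈ Ioo (0 : ℝ) 1) :
    HasDerivAt (fun β ↦ ∫ x, f x ^ (1 - β) * g x ^ β ∂μ)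
      (∫ x, f x ^ (1 - α) * g x ^ α * log (g x / f x) ∂μ) α := by
  have hnhds : Ioo (0 : ℝ) 1 ∈ nhds α := isOpen_Ioo.mem_nhds hα
  refine (hasDerivAt_integral_of_dominated_loc_of_deriv_le hnhds
    (F := fun β x ↦ f x ^ (1 - β) * g x ^ β)
    (F' := fun β x ↦ f x ^ (1 - β) * g x ^ β * log (g x / f x))
    (bound := fun x ↦ (f x + g x) * |log (g x / f x)|) ?_
    (hf.rpow_one_sub_mul_rpow hg hf0 hg0 (Ioo_subset_Icc_self hα)) ?_ ?_
    (integrable_add_mul_abs_log_div hf0 hg0 hfg hgf) ?_).2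
  · filter_upwards [hnhds] with β hβ
    exact (hf.rpow_one_sub_mul_rpow hg hf0 hg0 (Ioo_subset_Icc_self hβ)).aestronglyMeasurable
  · exact (((hf.aemeasurable.pow_const _).mul (hg.aemeasurable.pow_const _)).mul
      (hg.aemeasurable.div hf.aemeasurable).log).aestronglyMeasurable
  · refine Filter.Eventually.of_forall fun x β hβ ↦ ?_
    have hf0x := hf0 x
    have hg0x := hg0 x
    rw [norm_mul, norm_of_nonneg (by positivity), norm_eq_abs]
    exact mul_le_mul_of_nonneg_right
      (rpow_one_sub_mul_rpow_le_add hf0x hg0x (Ioo_subset_Icc_self hβ)) (abs_nonneg _)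
  · exact Filter.Eventually.of_forall fun x β hβ ↦
      hasDerivAt_rpow_one_sub_mul_rpow (hf0 x) (hg0 x) hβ

end

theorem stmt_5_general {Ω : Type} [MeasurableSpace Ω] (μ : Measure Ω)
    (φ₀ φ₁ : Ω → ℝ)
    (h₀nn : ∀ x, 0 ≤ φ₀ x) (h₁nn : ∀ x, 0 ≤ φ₁ x)
    (h₀d : ∫ x, φ₀ x ∂μ = 1) (h₁d : ∫ x, φ₁ x ∂μ = 1)
    -- same support
    (hsupp : ∀ x, 0 < φ₀ x ↔ 0 < φ₁ x)
    -- Kullback–Leibler divergences finite in both directions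
    (hKL₀ : Integrable (fun x => φ₀ x * Real.log (φ₀ x / φ₁ x)) μ)
    (hKL₁ : Integrable (fun x => φ₁ x * Real.log (φ₁ x / φ₀ x)) μ)
    -- `α*` maximizes the Chernoff α-divergence over (0,1)
    (αs : ℝ) (hαs : αs ∈ Set.Ioo (0 : ℝ) 1)
    (hmax : IsMaxOn (fun α : ℝ =>
        -Real.log (∫ x, φ₀ x ^ (1 - α) * φ₁ x ^ α ∂μ)) (Set.Ioo 0 1) αs) :
    ∫ x, (φ₀ x ^ (1 - αs) * φ₁ x ^ αs *
        Real.exp (-Real.log (∫ y, φ₀ y ^ (1 - αs) * φ₁ y ^ αs ∂μ))) *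
      Real.log (φ₀ x / φ₁ x) ∂μ = 0 := by
  have hint₀ : Integrable φ₀ μ := .of_integral_ne_zero (by rw [h₀d]; exact one_ne_zero)
  have hint₁ : Integrable φ₁ μ := .of_integral_ne_zero (by rw [h₁d]; exact one_ne_zero)
  set Z := ∫ y, φ₀ y ^ (1 - αs) * φ₁ y ^ αs ∂μ
  have hsupport : Function.support φ₀ ⊆ Function.support fun x ↦ φ₀ x ^ (1 - αs) * φ₁ x ^ αs :=
    fun x hx ↦ by
      have h₀ : 0 < φ₀ x := (h₀nn x).lt_of_ne' hx
      exact (mul_pos (rpow_pos_of_pos h₀ _) (rpow_pos_of_pos ((hsupp x).1 h₀) _)).ne'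
  have hZ : 0 < Z := by
    refine (integral_pos_iff_support_of_nonneg (fun x ↦ ?_)
      (hint₀.rpow_one_sub_mul_rpow hint₁ h₀nn h₁nn (Ioo_subset_Icc_self hαs))).2 ?_
    · exact mul_nonneg (rpow_nonneg (h₀nn x) _) (rpow_nonneg (h₁nn x) _)
    · have h₀pos : 0 < ∫ x, φ₀ x ∂μ := by rw [h₀d]; exact one_pos
      exact ((integral_pos_iff_support_of_nonneg h₀nn hint₀).1 h₀pos).trans_le
        (measure_mono hsupport)
  have hcrit : ∫ x, φ₀ x ^ (1 - αs) * φ₁ x ^ αs * log (φ₁ x / φ₀ x) ∂μ = 0 := by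
    have := (hmax.isLocalMax (isOpen_Ioo.mem_nhds hαs)).hasDerivAt_eq_zero
      ((hasDerivAt_integral_rpow_one_sub_mul_rpow hint₀ hint₁ h₀nn h₁nn hKL₀ hKL₁ hαs).log
        hZ.ne').neg
    rwa [neg_eq_zero, div_eq_zero_iff, or_iff_left hZ.ne'] at this
  calc _ = ∫ x, -exp (-log Z) * (φ₀ x ^ (1 - αs) * φ₁ x ^ αs * log (φ₁ x / φ₀ x)) ∂μ := by
        congr 1 with x
        rw [← inv_div (φ₀ x), log_inv]
        ring
    _ = 0 := by rw [integral_const_mul, hcrit, mul_zero]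

/-- **The tilted log-likelihood ratio has mean zero** (Lemma 1).
If `α*` maximizes the Chernoff α-divergence on `(0,1)` and `φ_{α*}` is the tilted density
`φ₀^{1−α*} φ₁^{α*} e^{D_{α*}(φ₀‖φ₁)}`, then `E_{Y ∼ φ_{α*}}[log(φ₀(Y)/φ₁(Y))] = 0`. -/
theorem stmt_5 {Ω : Type} [MeasurableSpace Ω] (μ : Measure Ω)
    (φ₀ φ₁ : Ω → ℝ)
    (h₀nn : ∀ x, 0 ≤ φ₀ x) (h₁nn : ∀ x, 0 ≤ φ₁ x)
    (h₀m : Measurable φ₀) (h₁m : Measurable φ₁)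
    (h₀d : ∫ x, φ₀ x ∂μ = 1) (h₁d : ∫ x, φ₁ x ∂μ = 1)
    -- same support
    (hsupp : ∀ x, 0 < φ₀ x ↔ 0 < φ₁ x)
    -- differing on a set of positive measure
    (hdiff : μ {x | φ₀ x ≠ φ₁ x} ≠ 0)
    -- Kullback–Leibler divergences finite in both directions
    (hKL₀ : Integrable (fun x => φ₀ x * Real.log (φ₀ x / φ₁ x)) μ)
    (hKL₁ : Integrable (fun x => φ₁ x * Real.log (φ₁ x / φ₀ x)) μ)
    -- `α*` maximizes the Chernoff α-divergence over (0,1)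
    (αs : ℝ) (hαs : αs ∈ Set.Ioo (0 : ℝ) 1)
    (hmax : IsMaxOn (fun α : ℝ =>
        -Real.log (∫ x, φ₀ x ^ (1 - α) * φ₁ x ^ α ∂μ)) (Set.Ioo 0 1) αs) :
    ∫ x, (φ₀ x ^ (1 - αs) * φ₁ x ^ αs *
        Real.exp (-Real.log (∫ y, φ₀ y ^ (1 - αs) * φ₁ y ^ αs ∂μ))) *
      Real.log (φ₀ x / φ₁ x) ∂μ = 0 :=
  stmt_5_general μ φ₀ φ₁ h₀nn h₁nn h₀d h₁d hsupp hKL₀ hKL₁ αs hαs hmax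
end

section
/- Let Φ be the cumulative distribution function of the standard normal distribution. Then for every x > 0: √(2π) e^{x²/2} (Φ(x) − 1/2) ≥ x + x³/3, and consequently Φ(x) ≥ 1/2 + (1/√(2π)) (x − 2x³/3). -/
open MeasureTheory Real

/-- The standard normal cumulative distribution function. -/
noncomputable def stdNormalCDF (x : ℝ) : ℝ :=
  (Real.sqrt (2 * Real.pi))⁻¹ * ∫ t in Set.Iic x, Real.exp (-(t ^ 2) / 2)

lemma gauss_integrable : Integrable (fun t : ℝ => Real.exp (-(t ^ 2) / 2)) := by
  have := integrable_exp_neg_mul_sq (b := (1/2 : ℝ)) (by norm_num)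
  convert this using 2 with t
  ring_nf

lemma gauss_Iic_zero : ∫ t in Set.Iic (0:ℝ), Real.exp (-(t ^ 2) / 2)
    = Real.sqrt (2 * Real.pi) / 2 := by
  have h1 : ∫ t in Set.Iic (0:ℝ), Real.exp (-(t ^ 2) / 2)
      = ∫ t in Set.Ioi (0:ℝ), Real.exp (-(t ^ 2) / 2) := by
    rw [show (0:ℝ) = -0 by norm_num, ← integral_comp_neg_Iic]
    simp
  rw [h1]
  have := integral_gaussian_Ioi (1/2)
  have h2 : ∀ t : ℝ, Real.exp (-(t ^ 2) / 2) = Real.exp (-(1/2) * t ^ 2) := by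
    intro t; ring_nf
  simp_rw [h2]
  rw [this]
  rw [show (π / (1/2) : ℝ) = 2 * π by ring]

lemma key (x : ℝ) (hx : 0 < x) :
    Real.exp (-(x ^ 2) / 2) * (x + x ^ 3 / 3) ≤ ∫ t in (0:ℝ)..x, Real.exp (-(t ^ 2) / 2) := by
  have hle : ∫ t in (0:ℝ)..x, Real.exp (-(x ^ 2) / 2) * (1 + (x ^ 2 - t ^ 2) / 2)
      ≤ ∫ t in (0:ℝ)..x, Real.exp (-(t ^ 2) / 2) := by
    apply intervalIntegral.integral_mono_on hx.le
    · apply IntervalIntegrable.const_mul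
      apply Continuous.intervalIntegrable; continuity
    · exact gauss_integrable.intervalIntegrable
    · intro t ht
      have : Real.exp (-(t ^ 2) / 2) = Real.exp (-(x ^ 2) / 2) * Real.exp ((x ^ 2 - t ^ 2)/2) := by
        rw [← Real.exp_add]; ring_nf
      rw [this]
      have h5 := Real.add_one_le_exp ((x ^ 2 - t ^ 2)/2)
      have h6 := (Real.exp_pos (-(x ^ 2) / 2)).le
      nlinarith
  refine le_trans (le_of_eq ?_) hle
  rw [intervalIntegral.integral_const_mul]
  congr 1
  have : ∀ t : ℝ, (1 + (x ^ 2 - t ^ 2) / 2) = (1 + x^2/2) + (-(1:ℝ)/2) * t^2 := by intro t; ring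
  simp_rw [this]
  rw [intervalIntegral.integral_add (by apply Continuous.intervalIntegrable; continuity)
    (by apply Continuous.intervalIntegrable; continuity),
    intervalIntegral.integral_const, intervalIntegral.integral_const_mul,
    integral_pow]
  simp only [smul_eq_mul]
  ring

/-- **Lower bounds near the origin** (Proposition 1, second part).
For `x > 0`: `√(2π) e^{x²/2}(Φ(x) − 1/2) ≥ x + x³/3`, and consequently
`Φ(x) ≥ 1/2 + (1/√(2π))(x − 2x³/3)`. -/
theorem stmt_7 (x : ℝ) (hx : 0 < x) :
    x + x ^ 3 / 3 ≤ Real.sqrt (2 * Real.pi) * Real.exp (x ^ 2 / 2) * (stdNormalCDF x - 1 / 2) ∧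
    1 / 2 + (Real.sqrt (2 * Real.pi))⁻¹ * (x - 2 * x ^ 3 / 3) ≤ stdNormalCDF x := by
  have hs : (0:ℝ) < Real.sqrt (2 * Real.pi) := Real.sqrt_pos.mpr (by positivity)
  have hdiff : stdNormalCDF x - 1 / 2
      = (Real.sqrt (2 * Real.pi))⁻¹ * ∫ t in (0:ℝ)..x, Real.exp (-(t ^ 2) / 2) := by
    rw [← intervalIntegral.integral_Iic_sub_Iic gauss_integrable.integrableOn gauss_integrable.integrableOn,
      gauss_Iic_zero, stdNormalCDF]
    field_simp
  have hkey := key x hx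
  have h1 : x + x ^ 3 / 3 ≤
      Real.sqrt (2 * Real.pi) * Real.exp (x ^ 2 / 2) * (stdNormalCDF x - 1 / 2) := by
    rw [hdiff]
    have : Real.sqrt (2 * Real.pi) * Real.exp (x ^ 2 / 2) *
        ((Real.sqrt (2 * Real.pi))⁻¹ * ∫ t in (0:ℝ)..x, Real.exp (-(t ^ 2) / 2))
        = Real.exp (x ^ 2 / 2) * ∫ t in (0:ℝ)..x, Real.exp (-(t ^ 2) / 2) := by
      field_simp
    rw [this]
    have h2 : Real.exp (x ^ 2 / 2) * (Real.exp (-(x ^ 2) / 2) * (x + x ^ 3 / 3))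
        = x + x ^ 3 / 3 := by
      rw [← mul_assoc, ← Real.exp_add]
      ring_nf
      simp
    calc x + x ^ 3 / 3 = Real.exp (x ^ 2 / 2) * (Real.exp (-(x ^ 2) / 2) * (x + x ^ 3 / 3)) :=
          h2.symm
      _ ≤ _ := by
          have := (Real.exp_pos (x ^ 2 / 2)).le
          exact mul_le_mul_of_nonneg_left hkey this
  refine ⟨h1, ?_⟩
  rcases le_or_gt (x - 2 * x ^ 3 / 3) 0 with hc | hc
  · -- stdNormalCDF x ≥ 1/2 suffices
    have hnn : (0:ℝ) ≤ ∫ t in (0:ℝ)..x, Real.exp (-(t ^ 2) / 2) :=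
      intervalIntegral.integral_nonneg hx.le (fun t _ => (Real.exp_pos _).le)
    have : (0:ℝ) ≤ stdNormalCDF x - 1/2 := by
      rw [hdiff]; positivity
    nlinarith [mul_nonpos_of_nonneg_of_nonpos (inv_nonneg.mpr hs.le) hc]
  · -- x² < 3/2
    have hx2 : x ^ 2 < 3 / 2 := by nlinarith
    have hexp : Real.exp (-(x ^ 2) / 2) ≥ 1 - x ^ 2 / 2 := by
      have := Real.add_one_le_exp (-(x ^ 2) / 2)
      linarith
    have hpoly : x - 2 * x ^ 3 / 3 ≤ Real.exp (-(x ^ 2) / 2) * (x + x ^ 3 / 3) := by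
      have h3 : (1 - x ^ 2 / 2) * (x + x ^ 3 / 3) ≤ Real.exp (-(x ^ 2) / 2) * (x + x ^ 3 / 3) :=
        mul_le_mul_of_nonneg_right hexp (by positivity)
      nlinarith
    have h4 : (Real.sqrt (2 * Real.pi))⁻¹ * (x - 2 * x ^ 3 / 3)
        ≤ (Real.sqrt (2 * Real.pi))⁻¹ * ∫ t in (0:ℝ)..x, Real.exp (-(t ^ 2) / 2) := by
      exact mul_le_mul_of_nonneg_left (le_trans hpoly hkey) (by positivity)
    linarith [hdiff ▸ h4]
end

section
/- Let α ∈ (0,1), let g_α(x) = exp(min(αx, (α−1)x)), and let Z ∼ N(0, σ²) with σ > 0. Then 1/(√(2π) σ α(1−α)) − 1/(√(2π) σ³ α³(1−α)³) ≤ E[g_α(Z)] ≤ 1/(√(2π) σ α(1−α)). Moreover E[g_α(Z)] equals exp(σ²α²/2) Φ(−σα) + exp(σ²(1−α)²/2) Φ(−σ(1−α)), where Φ is the standard normal CDF. -/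
/-!
Splitting the integral at `0`, where `g_α` changes branch, and completing the square turns each
half into a Gaussian tail: `∫₀^∞ e^{-bx - x²/(2σ²)} dx = σ R(σb)`, where
`R(c) = e^{c²/2} ∫_c^∞ e^{-t²/2} dt` is the Mills ratio. Hence
`E[g_α(Z)] = (R(σα) + R(σ(1-α))) / √(2π)`, which is the `Φ` formula. The bounds follow from
`1/c - 1/c³ ≤ R(c) ≤ 1/c`, obtained by comparing `e^{-t²/2}` on `(c, ∞)` with
`(t/c) e^{-t²/2}` and with `(1 - 3/t⁴) e^{-t²/2} = d/dt [-(1/t - 1/t³) e^{-t²/2}]`,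
together with `α³ + (1-α)³ ≤ 1`.
-/

open MeasureTheory Real

/-- `g_α(x) = min(e^{αx}, e^{(α-1)x})`. -/
noncomputable def gfun (α x : ℝ) : ℝ := min (Real.exp (α * x)) (Real.exp ((α - 1) * x))

/-- `E[g_α(Z)]` for `Z ∼ N(0, σ²)`. -/
noncomputable def gaussGExp (α σ : ℝ) : ℝ :=
  (Real.sqrt (2 * Real.pi) * σ)⁻¹ * ∫ x : ℝ, gfun α x * Real.exp (-(x ^ 2) / (2 * σ ^ 2))

open Set Filter Topology

lemma integral_comp_mul_add_Ioi {E : Type*} [NormedAddCommGroup E] [NormedSpace ℝ E]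
    (g : ℝ → E) (a d : ℝ) {c : ℝ} (hc : 0 < c) :
    ∫ x in Ioi a, g (c * x + d) = c⁻¹ • ∫ x in Ioi (c * a + d), g x := by
  have htrans := (measurePreserving_add_right volume d).setIntegral_preimage_emb
    (measurableEmbedding_addRight d) g (Ioi (c * a + d))
  rw [preimage_add_const_Ioi, add_sub_cancel_right] at htrans
  rw [integral_comp_mul_left_Ioi (fun y => g (y + d)) a hc, htrans]

lemma integrable_exp_neg_sq_div_two : Integrable fun t : ℝ => exp (-(t ^ 2) / 2) := by
  simpa [neg_div, div_eq_inv_mul] using integrable_exp_neg_mul_sq (b := (1 : ℝ) / 2) (by norm_num)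

lemma tendsto_exp_neg_sq_div_two_atTop :
    Tendsto (fun t : ℝ => exp (-(t ^ 2) / 2)) atTop (𝓝 0) := by
  have h : Tendsto (fun t : ℝ => t ^ 2 / 2) atTop atTop :=
    (tendsto_pow_atTop two_ne_zero).atTop_div_const two_pos
  simpa [Function.comp_def, neg_div] using tendsto_exp_neg_atTop_nhds_zero.comp h

lemma hasDerivAt_exp_neg_sq_div_two (t : ℝ) :
    HasDerivAt (fun t : ℝ => exp (-(t ^ 2) / 2)) (-t * exp (-(t ^ 2) / 2)) t := by
  have h : HasDerivAt (fun t : ℝ => -(t ^ 2) / 2) (-t) t := by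
    refine ((hasDerivAt_pow 2 t).neg.div_const 2).congr_deriv ?_
    push_cast
    ring
  exact h.exp.congr_deriv (mul_comm _ _)

lemma hasDerivAt_neg_exp_neg_sq_div_two (t : ℝ) :
    HasDerivAt (fun t : ℝ => -exp (-(t ^ 2) / 2)) (t * exp (-(t ^ 2) / 2)) t :=
  (hasDerivAt_exp_neg_sq_div_two t).neg.congr_deriv (by ring)

lemma integrableOn_Ioi_mul_exp_neg_sq_div_two {c : ℝ} (hc : 0 ≤ c) :
    IntegrableOn (fun t : ℝ => t * exp (-(t ^ 2) / 2)) (Ioi c) :=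
  integrableOn_Ioi_deriv_of_nonneg' (fun t _ => hasDerivAt_neg_exp_neg_sq_div_two t)
    (fun t ht => mul_nonneg (hc.trans ht.le) (exp_pos _).le)
    (by simpa using tendsto_exp_neg_sq_div_two_atTop.neg)

lemma integral_Ioi_mul_exp_neg_sq_div_two {c : ℝ} (hc : 0 ≤ c) :
    ∫ t in Ioi c, t * exp (-(t ^ 2) / 2) = exp (-(c ^ 2) / 2) := by
  have h := integral_Ioi_of_hasDerivAt_of_nonneg'
    (fun t _ => hasDerivAt_neg_exp_neg_sq_div_two t)
    (fun t ht => mul_nonneg (hc.trans ht.le) (exp_pos _).le)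
    (by simpa using tendsto_exp_neg_sq_div_two_atTop.neg)
  simpa using h

noncomputable def gaussTail (c : ℝ) : ℝ := ∫ t in Ioi c, exp (-(t ^ 2) / 2)

lemma gaussTail_le_exp_div {c : ℝ} (hc : 0 < c) : gaussTail c ≤ exp (-(c ^ 2) / 2) / c :=
  calc gaussTail c ≤ ∫ t in Ioi c, c⁻¹ * (t * exp (-(t ^ 2) / 2)) := by
        refine setIntegral_mono_on integrable_exp_neg_sq_div_two.integrableOn
          ((integrableOn_Ioi_mul_exp_neg_sq_div_two hc.le).const_mul _) measurableSet_Ioi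
          fun t ht => ?_
        have hct : 1 ≤ c⁻¹ * t := by rw [inv_mul_eq_div, one_le_div hc]; exact le_of_lt ht
        nlinarith [exp_pos (-(t ^ 2) / 2)]
    _ = exp (-(c ^ 2) / 2) / c := by
        rw [integral_const_mul, integral_Ioi_mul_exp_neg_sq_div_two hc.le, inv_mul_eq_div]

lemma hasDerivAt_inv_sub_inv_pow_three_mul_exp {t : ℝ} (ht : t ≠ 0) :
    HasDerivAt (fun t : ℝ => -((t⁻¹ - (t ^ 3)⁻¹) * exp (-(t ^ 2) / 2)))
      ((1 - 3 / t ^ 4) * exp (-(t ^ 2) / 2)) t := by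
  have h := (((hasDerivAt_inv ht).sub ((hasDerivAt_pow 3 t).inv (pow_ne_zero 3 ht))).mul
    (hasDerivAt_exp_neg_sq_div_two t)).neg
  refine h.congr_deriv ?_
  simp only [Pi.sub_apply, Pi.inv_apply]
  field_simp
  ring

lemma integrableOn_Ioi_one_sub_three_div_pow_four_mul_exp {c : ℝ} (hc : 0 < c) :
    IntegrableOn (fun t : ℝ => (1 - 3 / t ^ 4) * exp (-(t ^ 2) / 2)) (Ioi c) := by
  refine (integrable_exp_neg_sq_div_two.const_mul (1 + 3 / c ^ 4)).integrableOn.mono'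
    (by fun_prop) ((ae_restrict_iff' measurableSet_Ioi).mpr (ae_of_all _ fun t ht => ?_))
  have h3 : 3 / t ^ 4 ≤ 3 / c ^ 4 := by gcongr; exact le_of_lt ht
  rw [norm_mul, norm_of_nonneg (exp_pos _).le]
  gcongr
  rw [norm_eq_abs, abs_le]
  constructor <;> linarith [div_nonneg (by norm_num : (0:ℝ) ≤ 3) (pow_pos (hc.trans ht) 4).le]

lemma inv_sub_inv_pow_three_mul_exp_le_gaussTail {c : ℝ} (hc : 0 < c) :
    (c⁻¹ - (c ^ 3)⁻¹) * exp (-(c ^ 2) / 2) ≤ gaussTail c := by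
  have hlim :
      Tendsto (fun t : ℝ => -((t⁻¹ - (t ^ 3)⁻¹) * exp (-(t ^ 2) / 2))) atTop (𝓝 0) := by
    have hinv3 : Tendsto (fun t : ℝ => (t ^ 3)⁻¹) atTop (𝓝 0) :=
      tendsto_inv_atTop_zero.comp (tendsto_pow_atTop three_ne_zero)
    simpa using ((tendsto_inv_atTop_zero.sub hinv3).mul tendsto_exp_neg_sq_div_two_atTop).neg
  have hF := integral_Ioi_of_hasDerivAt_of_tendsto'
    (fun t ht => hasDerivAt_inv_sub_inv_pow_three_mul_exp (hc.trans_le ht).ne')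
    (integrableOn_Ioi_one_sub_three_div_pow_four_mul_exp hc) hlim
  rw [zero_sub, neg_neg] at hF
  rw [← hF]
  refine setIntegral_mono_on (integrableOn_Ioi_one_sub_three_div_pow_four_mul_exp hc)
    integrable_exp_neg_sq_div_two.integrableOn measurableSet_Ioi fun t ht => ?_
  have : 0 ≤ 3 / t ^ 4 := by positivity
  nlinarith [exp_pos (-(t ^ 2) / 2)]

noncomputable def millsRatio (c : ℝ) : ℝ := exp (c ^ 2 / 2) * gaussTail c

lemma exp_sq_div_two_mul_exp_neg_sq_div_two (c : ℝ) :
    exp (c ^ 2 / 2) * exp (-(c ^ 2) / 2) = 1 := by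
  rw [← exp_add, neg_div, add_neg_cancel, exp_zero]

lemma millsRatio_le_inv {c : ℝ} (hc : 0 < c) : millsRatio c ≤ c⁻¹ :=
  calc millsRatio c ≤ exp (c ^ 2 / 2) * (exp (-(c ^ 2) / 2) / c) := by
        unfold millsRatio; gcongr; exact gaussTail_le_exp_div hc
    _ = c⁻¹ := by rw [mul_div_assoc', exp_sq_div_two_mul_exp_neg_sq_div_two, one_div]

lemma inv_sub_inv_pow_three_le_millsRatio {c : ℝ} (hc : 0 < c) :
    c⁻¹ - (c ^ 3)⁻¹ ≤ millsRatio c :=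
  calc c⁻¹ - (c ^ 3)⁻¹
      = exp (c ^ 2 / 2) * ((c⁻¹ - (c ^ 3)⁻¹) * exp (-(c ^ 2) / 2)) := by
        rw [mul_left_comm, exp_sq_div_two_mul_exp_neg_sq_div_two, mul_one]
    _ ≤ millsRatio c := by
        unfold millsRatio
        gcongr
        exact inv_sub_inv_pow_three_mul_exp_le_gaussTail hc

lemma exp_sq_div_two_mul_stdNormalCDF_neg (c : ℝ) :
    exp (c ^ 2 / 2) * stdNormalCDF (-c) = (sqrt (2 * π))⁻¹ * millsRatio c := by
  rw [stdNormalCDF, millsRatio, gaussTail, ← integral_comp_neg_Ioi]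
  simp only [neg_sq]
  ring

lemma exp_neg_mul_sub_sq_div_eq (σ b x : ℝ) (hσ : σ ≠ 0) :
    exp (-(b * x) - x ^ 2 / (2 * σ ^ 2)) =
      exp ((σ * b) ^ 2 / 2) * exp (-((σ⁻¹ * x + σ * b) ^ 2) / 2) := by
  rw [← exp_add]
  congr 1
  field_simp
  ring

lemma integrable_exp_neg_mul_sub_sq_div (σ b : ℝ) (hσ : σ ≠ 0) :
    Integrable fun x : ℝ => exp (-(b * x) - x ^ 2 / (2 * σ ^ 2)) := by
  have h := (integrable_exp_neg_mul_sq (b := 1 / (2 * σ ^ 2)) (by positivity)).comp_sub_right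
    (-(σ ^ 2 * b))
  refine (h.const_mul (exp ((σ * b) ^ 2 / 2))).congr (ae_of_all _ fun x => ?_)
  dsimp only
  rw [exp_neg_mul_sub_sq_div_eq σ b x hσ]
  congr 2
  field_simp
  ring

lemma integral_Ioi_zero_exp_neg_mul_sub_sq_div {σ : ℝ} (hσ : 0 < σ) (b : ℝ) :
    ∫ x in Ioi (0 : ℝ), exp (-(b * x) - x ^ 2 / (2 * σ ^ 2)) = σ * millsRatio (σ * b) := by
  simp_rw [exp_neg_mul_sub_sq_div_eq σ b _ hσ.ne']
  rw [integral_const_mul, integral_comp_mul_add_Ioi (fun u => exp (-(u ^ 2) / 2)) 0 (σ * b)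
    (inv_pos.mpr hσ), mul_zero, zero_add, inv_inv, smul_eq_mul, millsRatio, gaussTail]
  ring

lemma gfun_of_nonpos (α : ℝ) {x : ℝ} (hx : x ≤ 0) : gfun α x = exp (α * x) :=
  min_eq_left (exp_le_exp.mpr (by nlinarith))

lemma gfun_of_nonneg (α : ℝ) {x : ℝ} (hx : 0 ≤ x) : gfun α x = exp ((α - 1) * x) :=
  min_eq_right (exp_le_exp.mpr (by nlinarith))

lemma integral_gfun_mul_exp_neg_sq_div (α : ℝ) {σ : ℝ} (hσ : 0 < σ) :
    ∫ x, gfun α x * exp (-(x ^ 2) / (2 * σ ^ 2)) =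
      σ * (millsRatio (σ * α) + millsRatio (σ * (1 - α))) := by
  have hneg : EqOn (fun x => gfun α x * exp (-(x ^ 2) / (2 * σ ^ 2)))
      (fun x => exp (-(α * -x) - (-x) ^ 2 / (2 * σ ^ 2))) (Iic 0) := fun x hx => by
    dsimp only
    rw [gfun_of_nonpos α hx, ← exp_add]
    ring_nf
  have hpos : EqOn (fun x => gfun α x * exp (-(x ^ 2) / (2 * σ ^ 2)))
      (fun x => exp (-((1 - α) * x) - x ^ 2 / (2 * σ ^ 2))) (Ioi 0) := fun x hx => by
    dsimp only
    rw [gfun_of_nonneg α (le_of_lt hx), ← exp_add]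
    ring_nf
  rw [← intervalIntegral.integral_Iic_add_Ioi
      (((integrable_exp_neg_mul_sub_sq_div σ α hσ.ne').comp_neg.integrableOn).congr_fun
        hneg.symm measurableSet_Iic)
      ((integrable_exp_neg_mul_sub_sq_div σ (1 - α) hσ.ne').integrableOn.congr_fun
        hpos.symm measurableSet_Ioi),
    setIntegral_congr_fun measurableSet_Iic hneg, setIntegral_congr_fun measurableSet_Ioi hpos,
    integral_comp_neg_Iic 0 fun x => exp (-(α * x) - x ^ 2 / (2 * σ ^ 2)), neg_zero,
    integral_Ioi_zero_exp_neg_mul_sub_sq_div hσ, integral_Ioi_zero_exp_neg_mul_sub_sq_div hσ,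
    mul_add]

lemma gaussGExp_eq_millsRatio (α : ℝ) {σ : ℝ} (hσ : 0 < σ) :
    gaussGExp α σ =
      (sqrt (2 * π))⁻¹ * (millsRatio (σ * α) + millsRatio (σ * (1 - α))) := by
  rw [gaussGExp, integral_gfun_mul_exp_neg_sq_div α hσ, mul_inv, mul_assoc,
    inv_mul_cancel_left₀ hσ.ne']

lemma gaussGExp_le {α σ : ℝ} (hα : α ∈ Ioo 0 1) (hσ : 0 < σ) :
    gaussGExp α σ ≤ 1 / (sqrt (2 * π) * σ * α * (1 - α)) := by
  obtain ⟨hα₀, hα₁⟩ := hα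
  have hβ₀ : 0 < 1 - α := sub_pos.mpr hα₁
  calc gaussGExp α σ ≤ (sqrt (2 * π))⁻¹ * ((σ * α)⁻¹ + (σ * (1 - α))⁻¹) := by
        rw [gaussGExp_eq_millsRatio α hσ]
        gcongr
        · exact millsRatio_le_inv (mul_pos hσ hα₀)
        · exact millsRatio_le_inv (mul_pos hσ hβ₀)
    _ = 1 / (sqrt (2 * π) * σ * α * (1 - α)) := by
        field_simp
        ring

lemma le_gaussGExp {α σ : ℝ} (hα : α ∈ Ioo 0 1) (hσ : 0 < σ) :
    1 / (sqrt (2 * π) * σ * α * (1 - α)) -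
      1 / (sqrt (2 * π) * σ ^ 3 * α ^ 3 * (1 - α) ^ 3) ≤ gaussGExp α σ := by
  obtain ⟨hα₀, hα₁⟩ := hα
  have hβ₀ : 0 < 1 - α := sub_pos.mpr hα₁
  have hcubes : α ^ 3 + (1 - α) ^ 3 ≤ 1 := by nlinarith
  calc 1 / (sqrt (2 * π) * σ * α * (1 - α)) -
        1 / (sqrt (2 * π) * σ ^ 3 * α ^ 3 * (1 - α) ^ 3)
      ≤ 1 / (sqrt (2 * π) * σ * α * (1 - α)) -
          (α ^ 3 + (1 - α) ^ 3) / (sqrt (2 * π) * σ ^ 3 * α ^ 3 * (1 - α) ^ 3) := by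
        gcongr
    _ = (sqrt (2 * π))⁻¹ *
          ((σ * α)⁻¹ - ((σ * α) ^ 3)⁻¹ +
            ((σ * (1 - α))⁻¹ - ((σ * (1 - α)) ^ 3)⁻¹)) := by
        field_simp
        ring
    _ ≤ gaussGExp α σ := by
        rw [gaussGExp_eq_millsRatio α hσ]
        gcongr
        · exact inv_sub_inv_pow_three_le_millsRatio (mul_pos hσ hα₀)
        · exact inv_sub_inv_pow_three_le_millsRatio (mul_pos hσ hβ₀)

lemma gaussGExp_eq_stdNormalCDF (α : ℝ) {σ : ℝ} (hσ : 0 < σ) :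
    gaussGExp α σ = exp (σ ^ 2 * α ^ 2 / 2) * stdNormalCDF (-(σ * α)) +
      exp (σ ^ 2 * (1 - α) ^ 2 / 2) * stdNormalCDF (-(σ * (1 - α))) := by
  rw [gaussGExp_eq_millsRatio α hσ, ← mul_pow, ← mul_pow,
    exp_sq_div_two_mul_stdNormalCDF_neg, exp_sq_div_two_mul_stdNormalCDF_neg, mul_add]

/-- **Gaussian computation for `g_α`** (Lemma 2).
For `Z ∼ N(0,σ²)` and `α ∈ (0,1)`:
`1/(√(2π)σα(1−α)) − 1/(√(2π)σ³α³(1−α)³) ≤ E[g_α(Z)] ≤ 1/(√(2π)σα(1−α))`, and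
`E[g_α(Z)] = e^{σ²α²/2}Φ(−σα) + e^{σ²(1−α)²/2}Φ(−σ(1−α))`. -/
theorem stmt_8 (α σ : ℝ) (hα : α ∈ Set.Ioo (0 : ℝ) 1) (hσ : 0 < σ) :
    (1 / (Real.sqrt (2 * Real.pi) * σ * α * (1 - α)) -
        1 / (Real.sqrt (2 * Real.pi) * σ ^ 3 * α ^ 3 * (1 - α) ^ 3) ≤ gaussGExp α σ ∧
      gaussGExp α σ ≤ 1 / (Real.sqrt (2 * Real.pi) * σ * α * (1 - α))) ∧
    gaussGExp α σ = Real.exp (σ ^ 2 * α ^ 2 / 2) * stdNormalCDF (-(σ * α)) +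
      Real.exp (σ ^ 2 * (1 - α) ^ 2 / 2) * stdNormalCDF (-(σ * (1 - α))) :=
  ⟨⟨le_gaussGExp hα hσ, gaussGExp_le hα hσ⟩, gaussGExp_eq_stdNormalCDF α hσ⟩
end

section
/- Let b = ∑_{j=1}^n A_j where A_j are independent Bernoulli random variables with E[A_j] ≤ p* ≤ 1 − ε for all j, for a constant ε ∈ (0,1). Then there exists a constant C_ε > 0 depending only on ε such that P( b > C_ε n p* ) ≤ (1 − p*)^n exp(−n p*). -/
open Finset
open scoped Classical

/-- **Degree truncation** (Lemma 7).  For a sum `b = ∑_j A_j` of independent Bernoulli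
variables with `E[A_j] ≤ p* ≤ 1 − ε`, there is `C_ε > 0` depending only on `ε` with
`P(b > C_ε n p*) ≤ (1−p*)ⁿ e^{−np*}`.  The probability is written as the total mass of
the Bernoulli product measure on the tail event. -/
theorem stmt_16 (ε : ℝ) (hε : ε ∈ Set.Ioo (0 : ℝ) 1) :
    ∃ C : ℝ, 0 < C ∧
      ∀ (n : ℕ) (q : Fin n → ℝ) (pstar : ℝ),
        (∀ j, 0 ≤ q j) → (∀ j, q j ≤ pstar) → pstar ≤ 1 - ε →
        (∑ x : Fin n → Bool,
            if C * (n : ℝ) * pstar < ((Finset.univ.filter fun j => x j = true).card : ℝ) then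
              ∏ j, (if x j then q j else 1 - q j)
            else 0)
          ≤ (1 - pstar) ^ n * Real.exp (-(n : ℝ) * pstar) := by
  obtain ⟨hε0, hε1⟩ := hε
  refine ⟨Real.exp 1 + 1/ε, by positivity, ?_⟩
  intro n q pstar hq0 hqp hps
  set C : ℝ := Real.exp 1 + 1/ε with hCdef
  rcases Nat.eq_zero_or_pos n with rfl | hn
  · simp
  have hp0 : 0 ≤ pstar := le_trans (hq0 ⟨0, hn⟩) (hqp ⟨0, hn⟩)
  have hq1 : ∀ j, q j ≤ 1 := fun j => le_trans (hqp j) (by linarith)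
  have hwnn : ∀ x : Fin n → Bool, (0:ℝ) ≤ ∏ j, (if x j then q j else 1 - q j) := by
    intro x
    refine Finset.prod_nonneg fun j _ => ?_
    by_cases h : x j <;> simp [h]
    · exact hq0 j
    · linarith [hq1 j]
  -- Step 1: pointwise bound on the indicator
  have step1 : (∑ x : Fin n → Bool,
        if C * (n : ℝ) * pstar < ((Finset.univ.filter fun j => x j = true).card : ℝ) then
          ∏ j, (if x j then q j else 1 - q j) else 0)
      ≤ ∑ x : Fin n → Bool,
          Real.exp (((Finset.univ.filter fun j => x j = true).card : ℝ) - C * n * pstar)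
            * ∏ j, (if x j then q j else 1 - q j) := by
    refine Finset.sum_le_sum fun x _ => ?_
    split_ifs with h
    · have h1 : (1:ℝ) ≤ Real.exp (((Finset.univ.filter fun j => x j = true).card : ℝ) - C * n * pstar) := by
        rw [Real.one_le_exp_iff]; linarith
      nlinarith [hwnn x]
    · exact mul_nonneg (le_of_lt (Real.exp_pos _)) (hwnn x)
  -- Step 2: rewrite each term as a product
  have step2 : ∀ x : Fin n → Bool,
      Real.exp (((Finset.univ.filter fun j => x j = true).card : ℝ) - C * n * pstar)
        * ∏ j, (if x j then q j else 1 - q j)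
      = Real.exp (-(C * n * pstar)) * ∏ j, (if x j then q j * Real.exp 1 else 1 - q j) := by
    intro x
    have hcard : (((Finset.univ.filter fun j => x j = true).card : ℕ) : ℝ)
        = ∑ j : Fin n, (if x j then (1:ℝ) else 0) := by
      rw [Finset.card_filter]
      push_cast
      exact Finset.sum_congr rfl fun j _ => by by_cases h : x j <;> simp [h]
    rw [hcard, sub_eq_add_neg, Real.exp_add, Real.exp_sum, mul_comm (∏ _j, _) _,
      mul_assoc, ← Finset.prod_mul_distrib]
    congr 1
    refine Finset.prod_congr rfl fun j _ => ?_
    by_cases h : x j <;> simp [h, mul_comm]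
  -- Step 3: swap sum and product
  have step3 : (∑ x : Fin n → Bool, ∏ j, (if x j then q j * Real.exp 1 else 1 - q j))
      = ∏ j : Fin n, (q j * Real.exp 1 + (1 - q j)) := by
    have := Finset.prod_univ_sum (fun _ : Fin n => (Finset.univ : Finset Bool))
      (fun j b => if b then q j * Real.exp 1 else 1 - q j)
    rw [Fintype.piFinset_univ] at this
    rw [← this]
    exact Finset.prod_congr rfl fun j _ => by simp
  -- Step 4: bound the product
  have step4 : (∏ j : Fin n, (q j * Real.exp 1 + (1 - q j)))
      ≤ Real.exp ((n : ℝ) * pstar * (Real.exp 1 - 1)) := by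
    have hb : ∀ j : Fin n, q j * Real.exp 1 + (1 - q j) ≤ Real.exp (q j * (Real.exp 1 - 1)) := by
      intro j
      have := Real.add_one_le_exp (q j * (Real.exp 1 - 1))
      nlinarith
    calc (∏ j : Fin n, (q j * Real.exp 1 + (1 - q j)))
        ≤ ∏ j : Fin n, Real.exp (q j * (Real.exp 1 - 1)) := by
          refine Finset.prod_le_prod (fun j _ => ?_) (fun j _ => hb j)
          nlinarith [hq0 j, hq1 j, Real.exp_pos 1, Real.one_le_exp (le_refl 0)]
      _ = Real.exp (∑ j : Fin n, q j * (Real.exp 1 - 1)) := (Real.exp_sum _ _).symm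
      _ ≤ Real.exp ((n : ℝ) * pstar * (Real.exp 1 - 1)) := by
          apply Real.exp_le_exp.mpr
          have he1 : (0:ℝ) ≤ Real.exp 1 - 1 := by
            have := Real.one_le_exp (le_of_lt Real.zero_lt_one); linarith
          calc (∑ j : Fin n, q j * (Real.exp 1 - 1))
              ≤ ∑ _j : Fin n, pstar * (Real.exp 1 - 1) :=
                Finset.sum_le_sum fun j _ => by nlinarith [hqp j]
            _ = (n : ℝ) * pstar * (Real.exp 1 - 1) := by
                simp [Finset.sum_const]; ring
  -- Step 5: final comparison
  have key : Real.exp (-(C * n * pstar)) * Real.exp ((n : ℝ) * pstar * (Real.exp 1 - 1))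
      ≤ (1 - pstar) ^ n * Real.exp (-(n : ℝ) * pstar) := by
    rw [← Real.exp_add]
    have heq : -(C * n * pstar) + (n : ℝ) * pstar * (Real.exp 1 - 1)
        = (-(n : ℝ) * pstar / ε) + (-(n : ℝ) * pstar) := by
      rw [hCdef]; field_simp; ring
    rw [heq, Real.exp_add]
    have hpow : Real.exp (-(n : ℝ) * pstar / ε) ≤ (1 - pstar) ^ n := by
      have h1p : Real.exp (-pstar / ε) ≤ 1 - pstar := by
        have hE : Real.exp (pstar / ε) * Real.exp (-pstar / ε) = 1 := by
          rw [← Real.exp_add]; ring_nf; exact Real.exp_zero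
        have hge : 1 + pstar / ε ≤ Real.exp (pstar / ε) := by linarith [Real.add_one_le_exp (pstar / ε)]
        have hfact : (1:ℝ) ≤ (1 - pstar) * (1 + pstar / ε) := by
          rw [← sub_nonneg]
          have : (1 - pstar) * (1 + pstar / ε) - 1 = pstar * (1 - ε - pstar) / ε := by
            field_simp; ring
          rw [this]
          apply div_nonneg _ (le_of_lt hε0)
          nlinarith
        nlinarith [Real.exp_pos (pstar / ε), Real.exp_pos (-pstar / ε)]
      have : Real.exp (-(n : ℝ) * pstar / ε) = (Real.exp (-pstar / ε)) ^ n := by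
        rw [← Real.exp_nat_mul]; ring_nf
      rw [this]
      exact pow_le_pow_left₀ (le_of_lt (Real.exp_pos _)) h1p n
    exact mul_le_mul_of_nonneg_right hpow (le_of_lt (Real.exp_pos _))
  calc (∑ x : Fin n → Bool,
        if C * (n : ℝ) * pstar < ((Finset.univ.filter fun j => x j = true).card : ℝ) then
          ∏ j, (if x j then q j else 1 - q j) else 0)
      ≤ ∑ x : Fin n → Bool,
          Real.exp (((Finset.univ.filter fun j => x j = true).card : ℝ) - C * n * pstar)
            * ∏ j, (if x j then q j else 1 - q j) := step1
    _ = Real.exp (-(C * n * pstar)) * ∑ x : Fin n → Bool,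
          ∏ j, (if x j then q j * Real.exp 1 else 1 - q j) := by
        rw [Finset.mul_sum]; exact Finset.sum_congr rfl fun x _ => step2 x
    _ = Real.exp (-(C * n * pstar)) * ∏ j : Fin n, (q j * Real.exp 1 + (1 - q j)) := by
        rw [step3]
    _ ≤ Real.exp (-(C * n * pstar)) * Real.exp ((n : ℝ) * pstar * (Real.exp 1 - 1)) := by
        exact mul_le_mul_of_nonneg_left step4 (le_of_lt (Real.exp_pos _))
    _ ≤ (1 - pstar) ^ n * Real.exp (-(n : ℝ) * pstar) := key
end

section
/- Consider a stochastic block model with parameters satisfying n_k ∈ [n/(βK), βn/K], p* = max_{k,ℓ} P_{kℓ} ≤ 1−ε, max P / min P ≤ ω, and K ≤ K*, with p_{kj} = P_{k z_j}. Fix distinct communities k ≠ ℓ, let α* = argmax_{α∈(0,1)} D_α(p_{k*}‖p_{ℓ*}) for the product Bernoulli distributions with parameters p_{k*} and p_{ℓ*}, and let n σ̄ₙ² = ∑_{j=1}^n [ log( p_{kj}(1−p_{ℓj}) / (p_{ℓj}(1−p_{kj})) ) ]² p_{α*j}(1−p_{α*j}), where p_{αj} = p_{kj}^{1−α} p_{ℓj}^α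 / ( p_{kj}^{1−α} p_{ℓj}^α + (1−p_{kj})^{1−α}(1−p_{ℓj})^α ). Then for any C₁ > 0 there exists C₂ > 0 depending only on β, ε, K*, ω such that if n p* ≤ C₂ · ( D*(p_{k*}‖p_{ℓ*}) )², then √n σ̄ₙ α*(1−α*) ≥ C₁. -/
/-!
Write `f(α) = D_α(p_{k*}‖p_{ℓ*})`. It vanishes at `α = 0, 1`, peaks at `α*`, and `-f''(α)` is
`n σ̄ₙ²(α)`, the variance of the log-likelihood ratio under the `α`-tilted law. Since
`P ≤ 1 - ε` and `max P / min P ≤ ω`, all coordinates of the log-likelihood ratio are bounded by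
`M = log ω - log ε`, so `n σ̄ₙ²(α)` varies by a factor at most `e^{4M}` over `[0, 1]`. Expanding
`f` to second order around `α*` towards both endpoints gives `D* ≤ (e^{4M}/2) n σ̄ₙ² α*(1 - α*)`,
while `n σ̄ₙ² ≤ M² n p*/ε ≤ (M²/ε) C₂ D*²`. Together,
`C₁² ≤ n σ̄ₙ² (α*(1 - α*))²` for `C₂ = ε / (e^{4M} M C₁ / 2)²`.
-/

open Finset

/-- Chernoff information `D*(p‖q)` of two product Bernoulli distributions. -/
noncomputable def chernoffBern {n : ℕ} (p q : Fin n → ℝ) : ℝ :=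
  sSup ((fun α : ℝ => ∑ j, -Real.log (p j ^ (1 - α) * q j ^ α +
      (1 - p j) ^ (1 - α) * (1 - q j) ^ α)) '' Set.Ioo 0 1)

/-- The tilted Bernoulli parameter `p_{αj}`. -/
noncomputable def tiltedBern (α pk pl : ℝ) : ℝ :=
  pk ^ (1 - α) * pl ^ α / (pk ^ (1 - α) * pl ^ α + (1 - pk) ^ (1 - α) * (1 - pl) ^ α)

open Real

section TwoPoint

variable {a b u v : ℝ}

/- Moment generating function of the two-point measure `a δ_u + b δ_v`, and the mean and variance
of its exponential tilt by `α`: the first two derivatives of `log ∘ twoPointMGF`. -/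
noncomputable def twoPointMGF (a b u v α : ℝ) : ℝ := a * exp (α * u) + b * exp (α * v)

noncomputable def twoPointMean (a b u v α : ℝ) : ℝ :=
  (a * u * exp (α * u) + b * v * exp (α * v)) / twoPointMGF a b u v α

noncomputable def twoPointVar (a b u v α : ℝ) : ℝ :=
  (u - v) ^ 2 * (a * exp (α * u)) * (b * exp (α * v)) / twoPointMGF a b u v α ^ 2

lemma twoPointMGF_pos (ha : 0 < a) (hb : 0 < b) (α : ℝ) : 0 < twoPointMGF a b u v α := by
  unfold twoPointMGF; positivity

lemma hasDerivAt_twoPointMGF (α : ℝ) :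
    HasDerivAt (twoPointMGF a b u v) (a * u * exp (α * u) + b * v * exp (α * v)) α :=
  ((((hasDerivAt_mul_const u).exp).const_mul a).fun_add
    (((hasDerivAt_mul_const v).exp).const_mul b)).congr_deriv (by ring)

lemma hasDerivAt_log_twoPointMGF (ha : 0 < a) (hb : 0 < b) (α : ℝ) :
    HasDerivAt (fun x => log (twoPointMGF a b u v x)) (twoPointMean a b u v α) α :=
  (hasDerivAt_twoPointMGF α).log (twoPointMGF_pos ha hb α).ne'

lemma hasDerivAt_twoPointMean (ha : 0 < a) (hb : 0 < b) (α : ℝ) :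
    HasDerivAt (twoPointMean a b u v) (twoPointVar a b u v α) α := by
  have hF := twoPointMGF_pos (u := u) (v := v) ha hb α
  refine ((((hasDerivAt_mul_const u).exp).const_mul (a * u)).fun_add
    (((hasDerivAt_mul_const v).exp).const_mul (b * v))).fun_div (hasDerivAt_twoPointMGF α)
    hF.ne' |>.congr_deriv ?_
  rw [twoPointVar]
  congr 1
  simp only [twoPointMGF]
  ring

lemma twoPointVar_add (α s : ℝ) :
    twoPointVar a b u v (α + s) = twoPointVar (a * exp (α * u)) (b * exp (α * v)) u v s := by
  simp only [twoPointVar, twoPointMGF, add_mul, exp_add]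
  ring_nf

lemma twoPointVar_le_exp_mul_twoPointVar_zero {M s : ℝ} (ha : 0 < a) (hb : 0 < b)
    (hu : |u| ≤ M) (hv : |v| ≤ M) (hs : |s| ≤ 1) :
    twoPointVar a b u v s ≤ exp (4 * M) * twoPointVar a b u v 0 := by
  have hbound : ∀ w, |w| ≤ M → exp (-M) ≤ exp (s * w) ∧ exp (s * w) ≤ exp M := fun w hw => by
    have : |s * w| ≤ M := by
      rw [abs_mul]; nlinarith [abs_nonneg s, abs_nonneg w]
    rw [abs_le] at this
    exact ⟨exp_le_exp.2 (by linarith), exp_le_exp.2 (by linarith)⟩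
  obtain ⟨hx0, hx1⟩ := hbound u hu
  obtain ⟨hy0, hy1⟩ := hbound v hv
  set x := exp (s * u)
  set y := exp (s * v)
  have hxy : x * y ≤ exp (2 * M) := by
    rw [two_mul, exp_add]; exact mul_le_mul hx1 hy1 (exp_pos _).le (exp_pos _).le
  have hab : a + b ≤ exp M * (a * x + b * y) := by
    have hM : exp M * exp (-M) = 1 := by rw [← exp_add]; simp
    nlinarith [mul_le_mul_of_nonneg_left hx0 (mul_nonneg (exp_pos M).le ha.le),
      mul_le_mul_of_nonneg_left hy0 (mul_nonneg (exp_pos M).le hb.le)]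
  have key : x * y * (a + b) ^ 2 ≤ exp (4 * M) * (a * x + b * y) ^ 2 := by
    calc x * y * (a + b) ^ 2 ≤ exp (2 * M) * (exp M * (a * x + b * y)) ^ 2 := by gcongr
      _ = exp (4 * M) * (a * x + b * y) ^ 2 := by
        rw [mul_pow, ← exp_nat_mul, ← mul_assoc, ← exp_add]; ring_nf
  simp only [twoPointVar, twoPointMGF, zero_mul, exp_zero, mul_one]
  rw [mul_div_assoc', div_le_div_iff₀ (by positivity) (by positivity)]
  calc (u - v) ^ 2 * (a * x) * (b * y) * (a + b) ^ 2
      = (u - v) ^ 2 * a * b * (x * y * (a + b) ^ 2) := by ring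
    _ ≤ (u - v) ^ 2 * a * b * (exp (4 * M) * (a * x + b * y) ^ 2) := by gcongr
    _ = _ := by ring

lemma twoPointVar_le_exp_mul {M α ξ : ℝ} (ha : 0 < a) (hb : 0 < b) (hu : |u| ≤ M)
    (hv : |v| ≤ M) (hξ : |ξ - α| ≤ 1) :
    twoPointVar a b u v ξ ≤ exp (4 * M) * twoPointVar a b u v α := by
  have h := twoPointVar_le_exp_mul_twoPointVar_zero (mul_pos ha (exp_pos (α * u)))
    (mul_pos hb (exp_pos (α * v))) hu hv hξ
  rwa [← twoPointVar_add, ← twoPointVar_add, add_sub_cancel, add_zero] at h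

end TwoPoint

section Bernoulli

variable {p q α : ℝ}

lemma rpow_one_sub_mul_rpow (hp : 0 < p) (hq : 0 < q) (α : ℝ) :
    p ^ (1 - α) * q ^ α = p * exp (α * (log q - log p)) :=
  calc p ^ (1 - α) * q ^ α = exp (log p + α * (log q - log p)) := by
        rw [rpow_def_of_pos hp, rpow_def_of_pos hq, ← exp_add]; ring_nf
    _ = p * exp (α * (log q - log p)) := by rw [exp_add, exp_log hp]

lemma rpow_one_sub_mul_rpow_self {x : ℝ} (hx : 0 < x) (α : ℝ) : x ^ (1 - α) * x ^ α = x := by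
  rw [← rpow_add hx]; simp

lemma rpow_one_sub_mul_rpow_le {x y x' y' : ℝ} (hx : 0 ≤ x) (hy : 0 ≤ y) (hxx' : x ≤ x')
    (hyy' : y ≤ y') (hα : α ∈ Set.Icc (0 : ℝ) 1) : x ^ (1 - α) * y ^ α ≤ x' ^ (1 - α) * y' ^ α :=
  mul_le_mul (rpow_le_rpow hx hxx' (by linarith [hα.2])) (rpow_le_rpow hy hyy' hα.1)
    (rpow_nonneg hy _) (rpow_nonneg (hx.trans hxx') _)

lemma rpow_add_rpow_nonneg (hp : p ∈ Set.Icc (0 : ℝ) 1) (hq : q ∈ Set.Icc (0 : ℝ) 1) :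
    0 ≤ p ^ (1 - α) * q ^ α + (1 - p) ^ (1 - α) * (1 - q) ^ α :=
  add_nonneg (mul_nonneg (rpow_nonneg hp.1 _) (rpow_nonneg hq.1 _))
    (mul_nonneg (rpow_nonneg (sub_nonneg.2 hp.2) _) (rpow_nonneg (sub_nonneg.2 hq.2) _))

lemma rpow_add_rpow_le_one (hp : p ∈ Set.Icc (0 : ℝ) 1) (hq : q ∈ Set.Icc (0 : ℝ) 1)
    (hα : α ∈ Set.Icc (0 : ℝ) 1) :
    p ^ (1 - α) * q ^ α + (1 - p) ^ (1 - α) * (1 - q) ^ α ≤ 1 := by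
  have h1α := sub_nonneg.2 hα.2
  have h1 := geom_mean_le_arith_mean2_weighted h1α hα.1 hp.1 hq.1 (sub_add_cancel 1 α)
  have h2 := geom_mean_le_arith_mean2_weighted h1α hα.1 (sub_nonneg.2 hp.2) (sub_nonneg.2 hq.2)
    (sub_add_cancel 1 α)
  linarith

lemma rpow_add_rpow_eq_twoPointMGF (hp : p ∈ Set.Ioo (0 : ℝ) 1) (hq : q ∈ Set.Ioo (0 : ℝ) 1)
    (α : ℝ) :
    p ^ (1 - α) * q ^ α + (1 - p) ^ (1 - α) * (1 - q) ^ α =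
      twoPointMGF p (1 - p) (log q - log p) (log (1 - q) - log (1 - p)) α := by
  rw [rpow_one_sub_mul_rpow hp.1 hq.1, rpow_one_sub_mul_rpow (sub_pos.2 hp.2) (sub_pos.2 hq.2)]
  rfl

lemma log_mul_one_sub_div (hp : p ∈ Set.Ioo (0 : ℝ) 1) (hq : q ∈ Set.Ioo (0 : ℝ) 1) :
    log (p * (1 - q) / (q * (1 - p))) = (log (1 - q) - log (1 - p)) - (log q - log p) := by
  have hp' := sub_pos.2 hp.2
  have hq' := sub_pos.2 hq.2
  rw [log_div (mul_pos hp.1 hq').ne' (mul_pos hq.1 hp').ne', log_mul hp.1.ne' hq'.ne',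
    log_mul hq.1.ne' hp'.ne']
  ring

lemma sq_log_mul_tiltedBern_eq_twoPointVar (hp : p ∈ Set.Ioo (0 : ℝ) 1)
    (hq : q ∈ Set.Ioo (0 : ℝ) 1) (α : ℝ) :
    log (p * (1 - q) / (q * (1 - p))) ^ 2 * tiltedBern α p q * (1 - tiltedBern α p q) =
      twoPointVar p (1 - p) (log q - log p) (log (1 - q) - log (1 - p)) α := by
  have hF := twoPointMGF_pos (u := log q - log p) (v := log (1 - q) - log (1 - p)) hp.1
    (sub_pos.2 hp.2) α
  rw [tiltedBern, rpow_add_rpow_eq_twoPointMGF hp hq, rpow_one_sub_mul_rpow hp.1 hq.1,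
    log_mul_one_sub_div hp hq, twoPointVar]
  field_simp
  simp only [twoPointMGF, mul_comm α]
  ring

lemma tiltedBern_nonneg (hp : p ∈ Set.Icc (0 : ℝ) 1) (hq : q ∈ Set.Icc (0 : ℝ) 1) :
    0 ≤ tiltedBern α p q :=
  div_nonneg (mul_nonneg (rpow_nonneg hp.1 _) (rpow_nonneg hq.1 _)) (rpow_add_rpow_nonneg hp hq)

lemma tiltedBern_le_div {m ε : ℝ} (hp : 0 < p) (hq : 0 < q) (hpm : p ≤ m) (hqm : q ≤ m)
    (hε : 0 < ε) (hpε : ε ≤ 1 - p) (hqε : ε ≤ 1 - q) (hα : α ∈ Set.Icc (0 : ℝ) 1) :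
    tiltedBern α p q ≤ m / ε := by
  have hN : p ^ (1 - α) * q ^ α ≤ m :=
    (rpow_one_sub_mul_rpow_le hp.le hq.le hpm hqm hα).trans_eq
      (rpow_one_sub_mul_rpow_self (hp.trans_le hpm) α)
  have hR : ε ≤ (1 - p) ^ (1 - α) * (1 - q) ^ α :=
    (rpow_one_sub_mul_rpow_self hε α).symm.trans_le
      (rpow_one_sub_mul_rpow_le hε.le hε.le hpε hqε hα)
  have hN0 : 0 ≤ p ^ (1 - α) * q ^ α := by positivity
  calc tiltedBern α p q ≤ p ^ (1 - α) * q ^ α / ((1 - p) ^ (1 - α) * (1 - q) ^ α) :=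
        div_le_div_of_nonneg_left hN0 (hε.trans_le hR) (le_add_of_nonneg_left hN0)
    _ ≤ m / ε := div_le_div₀ (hN0.trans hN) hN hε hR

lemma abs_log_sub_log_le {x y c : ℝ} (hx : 0 < x) (hy : 0 < y) (hxy : x ≤ c * y)
    (hyx : y ≤ c * x) : |log x - log y| ≤ log c := by
  have hc : 0 < c := pos_of_mul_pos_left (hx.trans_le hxy) hy.le
  have h1 := log_le_log hx hxy
  have h2 := log_le_log hy hyx
  rw [log_mul hc.ne' hy.ne'] at h1
  rw [log_mul hc.ne' hx.ne'] at h2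
  rw [abs_le]; constructor <;> linarith

lemma abs_log_sub_log_le_neg_log {x y ε : ℝ} (hε : 0 < ε) (hx : ε ≤ x) (hy : ε ≤ y) (hx1 : x ≤ 1)
    (hy1 : y ≤ 1) : |log x - log y| ≤ -log ε := by
  have hε' : ∀ w, ε ≤ w → 1 ≤ ε⁻¹ * w := fun w hw => by rw [le_inv_mul_iff₀ hε]; linarith
  rw [← log_inv]
  exact abs_log_sub_log_le (hε.trans_le hx) (hε.trans_le hy) (hx1.trans (hε' y hy))
    (hy1.trans (hε' x hx))

end Bernoulli

lemma sub_le_of_hasDerivAt_eq_zero {f f' f'' : ℝ → ℝ} {a b x y B : ℝ}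
    (hf : ∀ t, HasDerivAt f (f' t) t) (hf' : ∀ t, HasDerivAt f' (f'' t) t)
    (hx : x ∈ Set.Ioo a b) (hy : y ∈ Set.Icc a b) (hcrit : f' x = 0)
    (hB : ∀ t ∈ Set.Ioo a b, -f'' t ≤ B) : f x - f y ≤ B / 2 * (y - x) ^ 2 := by
  -- `f + B/2 (· - x)²` is convex with a critical point at `x`
  set φ := fun t => f t + B / 2 * (t - x) ^ 2
  have hφ : ∀ t, HasDerivAt φ (f' t + B * (t - x)) t := fun t =>
    ((hf t).fun_add ((((hasDerivAt_id' t).sub_const x).fun_pow 2).const_mul (B / 2))).congr_deriv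
      (by ring)
  have hφ' : ∀ t, HasDerivAt (fun t => f' t + B * (t - x)) (f'' t + B) t := fun t =>
    ((hf' t).fun_add (((hasDerivAt_id' t).sub_const x).const_mul B)).congr_deriv (by ring)
  have hconv : ConvexOn ℝ (Set.Icc a b) φ := by
    refine convexOn_of_hasDerivWithinAt2_nonneg (convex_Icc a b)
      (fun t _ => (hφ t).continuousAt.continuousWithinAt) (fun t _ => (hφ t).hasDerivWithinAt)
      (fun t _ => (hφ' t).hasDerivWithinAt) fun t ht => ?_
    rw [interior_Icc] at ht
    linarith [hB t ht]
  have hmin : IsMinOn φ (Set.Icc a b) x := by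
    refine hconv.isMinOn_of_rightDeriv_eq_zero (by rwa [interior_Icc]) ?_
    rw [(hφ x).hasDerivWithinAt.derivWithin (uniqueDiffWithinAt_Ioi x), hcrit]
    simp
  have : φ x ≤ φ y := hmin hy
  simp only [φ, sub_self] at this
  linarith

section Chernoff

variable {ι : Type*} [Fintype ι] {p q : ι → ℝ} {M α : ℝ}

noncomputable def chernoffAlphaDiv (p q : ι → ℝ) (α : ℝ) : ℝ :=
  ∑ j, -log (p j ^ (1 - α) * q j ^ α + (1 - p j) ^ (1 - α) * (1 - q j) ^ α)

/- The paper's `n σ̄ₙ²` at `α`: the variance of the log-likelihood ratio under the `α`-tilted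
product law, which is `-∂²/∂α² chernoffAlphaDiv`. -/
noncomputable def tiltedLLRVar (p q : ι → ℝ) (α : ℝ) : ℝ :=
  ∑ j, log (p j * (1 - q j) / (q j * (1 - p j))) ^ 2 * tiltedBern α (p j) (q j) *
    (1 - tiltedBern α (p j) (q j))

lemma chernoffAlphaDiv_zero (p q : ι → ℝ) : chernoffAlphaDiv p q 0 = 0 := by
  simp [chernoffAlphaDiv]

lemma chernoffAlphaDiv_one (p q : ι → ℝ) : chernoffAlphaDiv p q 1 = 0 := by
  simp [chernoffAlphaDiv]

lemma chernoffAlphaDiv_nonneg (hp : ∀ j, p j ∈ Set.Icc (0 : ℝ) 1)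
    (hq : ∀ j, q j ∈ Set.Icc (0 : ℝ) 1) (hα : α ∈ Set.Icc (0 : ℝ) 1) :
    0 ≤ chernoffAlphaDiv p q α :=
  sum_nonneg fun j _ => neg_nonneg.2 <|
    log_nonpos (rpow_add_rpow_nonneg (hp j) (hq j)) (rpow_add_rpow_le_one (hp j) (hq j) hα)

lemma exists_hasDerivAt_chernoffAlphaDiv (hp : ∀ j, p j ∈ Set.Ioo (0 : ℝ) 1)
    (hq : ∀ j, q j ∈ Set.Ioo (0 : ℝ) 1) :
    ∃ D : ℝ → ℝ, (∀ α, HasDerivAt (chernoffAlphaDiv p q) (D α) α) ∧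
      ∀ α, HasDerivAt D (-tiltedLLRVar p q α) α := by
  have hp' : ∀ j, 0 < 1 - p j := fun j => sub_pos.2 (hp j).2
  refine ⟨fun α => ∑ j, -twoPointMean (p j) (1 - p j) (log (q j) - log (p j))
    (log (1 - q j) - log (1 - p j)) α, fun α => ?_, fun α => ?_⟩
  · have hfun : chernoffAlphaDiv p q = fun α => ∑ j, -log (twoPointMGF (p j) (1 - p j)
        (log (q j) - log (p j)) (log (1 - q j) - log (1 - p j)) α) := by
      ext α
      simp only [chernoffAlphaDiv, rpow_add_rpow_eq_twoPointMGF (hp _) (hq _)]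
    rw [hfun]
    exact HasDerivAt.fun_sum fun j _ => (hasDerivAt_log_twoPointMGF (hp j).1 (hp' j) α).neg
  · simp only [tiltedLLRVar, sq_log_mul_tiltedBern_eq_twoPointVar (hp _) (hq _)]
    rw [← sum_neg_distrib]
    exact HasDerivAt.fun_sum fun j _ => (hasDerivAt_twoPointMean (hp j).1 (hp' j) α).neg

lemma tiltedLLRVar_le_exp_mul {ξ : ℝ} (hp : ∀ j, p j ∈ Set.Ioo (0 : ℝ) 1)
    (hq : ∀ j, q j ∈ Set.Ioo (0 : ℝ) 1) (hu : ∀ j, |log (q j) - log (p j)| ≤ M)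
    (hv : ∀ j, |log (1 - q j) - log (1 - p j)| ≤ M) (hξ : |ξ - α| ≤ 1) :
    tiltedLLRVar p q ξ ≤ exp (4 * M) * tiltedLLRVar p q α := by
  simp only [tiltedLLRVar, sq_log_mul_tiltedBern_eq_twoPointVar (hp _) (hq _), mul_sum]
  exact sum_le_sum fun j _ =>
    twoPointVar_le_exp_mul (hp j).1 (sub_pos.2 (hp j).2) (hu j) (hv j) hξ

lemma chernoffAlphaDiv_le_mul_tiltedLLRVar (hp : ∀ j, p j ∈ Set.Ioo (0 : ℝ) 1)
    (hq : ∀ j, q j ∈ Set.Ioo (0 : ℝ) 1) (hu : ∀ j, |log (q j) - log (p j)| ≤ M)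
    (hv : ∀ j, |log (1 - q j) - log (1 - p j)| ≤ M) (hα : α ∈ Set.Ioo (0 : ℝ) 1)
    (hmax : IsLocalMax (chernoffAlphaDiv p q) α) :
    chernoffAlphaDiv p q α ≤ exp (4 * M) / 2 * tiltedLLRVar p q α * (α * (1 - α)) := by
  obtain ⟨D, hD, hD'⟩ := exists_hasDerivAt_chernoffAlphaDiv hp hq
  set B := exp (4 * M) * tiltedLLRVar p q α
  have hB : ∀ t ∈ Set.Ioo (0 : ℝ) 1, - -tiltedLLRVar p q t ≤ B := fun t ht => by
    rw [neg_neg]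
    exact tiltedLLRVar_le_exp_mul hp hq hu hv
      (abs_le.2 ⟨by linarith [ht.1, hα.2], by linarith [ht.2, hα.1]⟩)
  have hcrit := hmax.hasDerivAt_eq_zero (hD α)
  have hright := sub_le_of_hasDerivAt_eq_zero hD hD' hα (Set.right_mem_Icc.2 zero_le_one)
    hcrit hB
  have hleft := sub_le_of_hasDerivAt_eq_zero hD hD' hα (Set.left_mem_Icc.2 zero_le_one)
    hcrit hB
  rw [chernoffAlphaDiv_one, sub_zero] at hright
  rw [chernoffAlphaDiv_zero, sub_zero] at hleft
  -- `α (1 - α) = (1 - α) α² + α (1 - α)²`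
  nlinarith [mul_le_mul_of_nonneg_left hleft (sub_nonneg.2 hα.2.le),
    mul_le_mul_of_nonneg_left hright hα.1.le]

lemma tiltedLLRVar_le_card_mul {m ε L : ℝ} (hp : ∀ j, 0 < p j) (hq : ∀ j, 0 < q j)
    (hpm : ∀ j, p j ≤ m) (hqm : ∀ j, q j ≤ m) (hε : 0 < ε) (hpε : ∀ j, ε ≤ 1 - p j)
    (hqε : ∀ j, ε ≤ 1 - q j) (hL : ∀ j, |log (p j * (1 - q j) / (q j * (1 - p j)))| ≤ L)
    (hα : α ∈ Set.Icc (0 : ℝ) 1) :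
    tiltedLLRVar p q α ≤ Fintype.card ι * (L ^ 2 * (m / ε)) := by
  calc tiltedLLRVar p q α ≤ ∑ _j : ι, L ^ 2 * (m / ε) := sum_le_sum fun j _ => ?_
    _ = Fintype.card ι * (L ^ 2 * (m / ε)) := by simp
  set t := log (p j * (1 - q j) / (q j * (1 - p j)))
  set r := tiltedBern α (p j) (q j)
  have hr : 0 ≤ r := tiltedBern_nonneg ⟨(hp j).le, by linarith [hpε j]⟩
    ⟨(hq j).le, by linarith [hqε j]⟩
  have ht : t ^ 2 ≤ L ^ 2 := sq_le_sq' (abs_le.1 (hL j)).1 (abs_le.1 (hL j)).2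
  calc t ^ 2 * r * (1 - r) ≤ t ^ 2 * r := mul_le_of_le_one_right (by positivity) (by linarith)
    _ ≤ L ^ 2 * (m / ε) := mul_le_mul ht (tiltedBern_le_div (hp j) (hq j) (hpm j) (hqm j) hε
        (hpε j) (hqε j) hα) hr (sq_nonneg L)

lemma sq_chernoffAlphaDiv_le_card_mul {m ε ω : ℝ} (hp : ∀ j, 0 < p j) (hq : ∀ j, 0 < q j)
    (hpm : ∀ j, p j ≤ m) (hqm : ∀ j, q j ≤ m) (hm : m ≤ 1 - ε) (hε : 0 < ε) (hε1 : ε ≤ 1)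
    (hω : 1 ≤ ω) (hpq : ∀ j, p j ≤ ω * q j) (hqp : ∀ j, q j ≤ ω * p j)
    (hα : α ∈ Set.Ioo (0 : ℝ) 1) (hmax : IsLocalMax (chernoffAlphaDiv p q) α) :
    chernoffAlphaDiv p q α ^ 2 ≤
      (exp (4 * (log ω - log ε)) / 2 * (log ω - log ε)) ^ 2 / ε * (Fintype.card ι * m) *
        (tiltedLLRVar p q α * (α * (1 - α)) ^ 2) := by
  set M := log ω - log ε
  have hlogω := log_nonneg hω
  have hlogε := log_nonpos hε.le hε1
  have hpε : ∀ j, ε ≤ 1 - p j := fun j => by linarith [hpm j]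
  have hqε : ∀ j, ε ≤ 1 - q j := fun j => by linarith [hqm j]
  have hp' : ∀ j, p j ∈ Set.Ioo (0 : ℝ) 1 := fun j => ⟨hp j, by linarith [hpε j]⟩
  have hq' : ∀ j, q j ∈ Set.Ioo (0 : ℝ) 1 := fun j => ⟨hq j, by linarith [hqε j]⟩
  have hu : ∀ j, |log (q j) - log (p j)| ≤ log ω := fun j =>
    abs_log_sub_log_le (hq j) (hp j) (hqp j) (hpq j)
  have hv : ∀ j, |log (1 - q j) - log (1 - p j)| ≤ -log ε := fun j =>
    abs_log_sub_log_le_neg_log hε (hqε j) (hpε j) (by linarith [hq j]) (by linarith [hp j])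
  have hDS := chernoffAlphaDiv_le_mul_tiltedLLRVar (M := M) hp' hq'
    (fun j => (hu j).trans (by linarith)) (fun j => (hv j).trans (by linarith)) hα hmax
  have hS := tiltedLLRVar_le_card_mul hp hq hpm hqm hε hpε hqε (L := M) (fun j => by
    rw [log_mul_one_sub_div (hp' j) (hq' j)]
    exact (abs_sub _ _).trans (by linarith [hu j, hv j])) (Set.Ioo_subset_Icc_self hα)
  have hD0 := chernoffAlphaDiv_nonneg (fun j => Set.Ioo_subset_Icc_self (hp' j))
    (fun j => Set.Ioo_subset_Icc_self (hq' j)) (Set.Ioo_subset_Icc_self hα)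
  set c := exp (4 * M) / 2
  set S := tiltedLLRVar p q α
  set a := α * (1 - α)
  have hca : 0 < c * a := mul_pos (by positivity) (mul_pos hα.1 (sub_pos.2 hα.2))
  have hS0 : 0 ≤ S := (mul_nonneg_iff_of_pos_left hca).1 (by linarith)
  calc chernoffAlphaDiv p q α ^ 2 ≤ (c * S * a) ^ 2 := pow_le_pow_left₀ hD0 hDS 2
    _ = c ^ 2 * (S * a ^ 2) * S := by ring
    _ ≤ c ^ 2 * (S * a ^ 2) * (Fintype.card ι * (M ^ 2 * (m / ε))) := by gcongr
    _ = (c * M) ^ 2 / ε * (Fintype.card ι * m) * (S * a ^ 2) := by ring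

end Chernoff

lemma le_sqrt_mul_of_le_div_of_le_mul {x y K C S a : ℝ} (hx : 0 < x) (hK : 0 < K) (hC : 0 < C)
    (ha : 0 ≤ a) (hxy : x ≤ 1 / (K * C ^ 2) * y) (hyx : y ≤ K * x * (S * a ^ 2)) :
    C ≤ √S * a := by
  have h : x * C ^ 2 ≤ x * (S * a ^ 2) := by
    rw [one_div, le_inv_mul_iff₀ (by positivity)] at hxy
    exact le_of_mul_le_mul_left (by linarith) hK
  calc C ≤ √(S * a ^ 2) := le_sqrt_of_sq_le (le_of_mul_le_mul_left h hx)
    _ = √S * a := by rw [sqrt_mul' _ (sq_nonneg a), sqrt_sq ha]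

theorem stmt_18_general (β ε ω : ℝ) (Kstar : ℕ)
    (hε : ε ∈ Set.Ioo (0 : ℝ) 1) (hω : 1 < ω)
    (C₁ : ℝ) (hC₁ : 0 < C₁) :
    ∃ C₂ : ℝ, 0 < C₂ ∧
    ∀ (n K : ℕ) (z : Fin n → Fin K) (P : Fin K → Fin K → ℝ) (pstar : ℝ)
      (k ℓ : Fin K) (αs σbar : ℝ),
      0 < n → 0 < K → K ≤ Kstar →
      (∀ a b, P a b = P b a) →
      (∀ a b, 0 < P a b) →
      IsGreatest (Set.range fun ab : Fin K × Fin K => P ab.1 ab.2) pstar →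
      pstar ≤ 1 - ε →
      (∀ a b a' b', P a b ≤ ω * P a' b') →
      (∀ c' : Fin K,
        (n : ℝ) / (β * K) ≤ ((Finset.univ.filter fun i => z i = c').card : ℝ) ∧
        ((Finset.univ.filter fun i => z i = c').card : ℝ) ≤ β * n / K) →
      k ≠ ℓ →
      -- `α*` maximizes the Chernoff α-divergence over (0,1)
      αs ∈ Set.Ioo (0 : ℝ) 1 →
      IsMaxOn (fun α : ℝ => ∑ j, -Real.log
          ((P k (z j)) ^ (1 - α) * (P ℓ (z j)) ^ α +
            (1 - P k (z j)) ^ (1 - α) * (1 - P ℓ (z j)) ^ α)) (Set.Ioo 0 1) αs →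
      -- `n σ̄ₙ² = ∑_j [log(p_{kj}(1−p_{ℓj})/(p_{ℓj}(1−p_{kj})))]² p_{α*j}(1−p_{α*j})`
      σbar = Real.sqrt ((1 / (n : ℝ)) * ∑ j,
          (Real.log ((P k (z j) * (1 - P ℓ (z j))) / (P ℓ (z j) * (1 - P k (z j))))) ^ 2 *
            tiltedBern αs (P k (z j)) (P ℓ (z j)) *
            (1 - tiltedBern αs (P k (z j)) (P ℓ (z j)))) →
      (n : ℝ) * pstar ≤
          C₂ * (chernoffBern (fun j => P k (z j)) (fun j => P ℓ (z j))) ^ 2 →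
      C₁ ≤ Real.sqrt (n : ℝ) * σbar * αs * (1 - αs) := by
  obtain ⟨hε0, hε1⟩ := hε
  set κ := (exp (4 * (log ω - log ε)) / 2 * (log ω - log ε)) ^ 2 / ε
  have hκ : 0 < κ := div_pos (pow_pos (mul_pos (by positivity)
    (by linarith [log_pos hω, log_neg hε0 hε1])) 2) hε0
  refine ⟨1 / (κ * C₁ ^ 2), by positivity, ?_⟩
  intro n K z P pstar k ℓ αs σbar hn _ _ _ hP hgr hpstar hω' _ _ hαs hmax hσ hnp
  set p := fun j => P k (z j)
  set q := fun j => P ℓ (z j)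
  have hle : ∀ a b, P a b ≤ pstar := fun a b => hgr.2 ⟨(a, b), rfl⟩
  have hD : chernoffBern p q = chernoffAlphaDiv p q αs :=
    IsGreatest.csSup_eq ⟨Set.mem_image_of_mem _ hαs, by rintro _ ⟨x, hx, rfl⟩; exact hmax hx⟩
  have hD2 := sq_chernoffAlphaDiv_le_card_mul (fun j => hP _ _) (fun j => hP _ _)
    (fun j => hle _ _) (fun j => hle _ _) hpstar hε0 hε1.le hω.le (fun j => hω' _ _ _ _)
    (fun j => hω' _ _ _ _) hαs (hmax.isLocalMax (Ioo_mem_nhds hαs.1 hαs.2))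
  rw [Fintype.card_fin] at hD2
  have hσS : √n * σbar = √(tiltedLLRVar p q αs) := by
    rw [hσ, ← sqrt_mul n.cast_nonneg, ← mul_assoc, mul_one_div_cancel (by positivity), one_mul]
    rfl
  calc C₁ ≤ √(tiltedLLRVar p q αs) * (αs * (1 - αs)) :=
        le_sqrt_mul_of_le_div_of_le_mul (mul_pos (Nat.cast_pos.2 hn) ((hP k k).trans_le (hle k k)))
          hκ hC₁ (mul_pos hαs.1 (sub_pos.2 hαs.2)).le (hD ▸ hnp) hD2
    _ = √n * σbar * αs * (1 - αs) := by rw [← hσS]; ring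

/-- **Lower bound on `√n σ̄ₙ α*(1−α*)`** (Lemma 11).  In the SBM, for any `C₁ > 0`
there is `C₂ > 0` depending only on `β, ε, K*, ω` such that `np* ≤ C₂ (D*)²` implies
`√n σ̄ₙ α*(1−α*) ≥ C₁`. -/
theorem stmt_18 (β ε ω : ℝ) (Kstar : ℕ)
    (hβ : 1 < β) (hε : ε ∈ Set.Ioo (0 : ℝ) 1) (hω : 1 < ω)
    (C₁ : ℝ) (hC₁ : 0 < C₁) :
    ∃ C₂ : ℝ, 0 < C₂ ∧
    ∀ (n K : ℕ) (z : Fin n → Fin K) (P : Fin K → Fin K → ℝ) (pstar : ℝ)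
      (k ℓ : Fin K) (αs σbar : ℝ),
      0 < n → 0 < K → K ≤ Kstar →
      (∀ a b, P a b = P b a) →
      (∀ a b, 0 < P a b) →
      IsGreatest (Set.range fun ab : Fin K × Fin K => P ab.1 ab.2) pstar →
      pstar ≤ 1 - ε →
      (∀ a b a' b', P a b ≤ ω * P a' b') →
      (∀ c' : Fin K,
        (n : ℝ) / (β * K) ≤ ((Finset.univ.filter fun i => z i = c').card : ℝ) ∧
        ((Finset.univ.filter fun i => z i = c').card : ℝ) ≤ β * n / K) →
      k ≠ ℓ →
      -- `α*` maximizes the Chernoff α-divergence over (0,1)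
      αs ∈ Set.Ioo (0 : ℝ) 1 →
      IsMaxOn (fun α : ℝ => ∑ j, -Real.log
          ((P k (z j)) ^ (1 - α) * (P ℓ (z j)) ^ α +
            (1 - P k (z j)) ^ (1 - α) * (1 - P ℓ (z j)) ^ α)) (Set.Ioo 0 1) αs →
      -- `n σ̄ₙ² = ∑_j [log(p_{kj}(1−p_{ℓj})/(p_{ℓj}(1−p_{kj})))]² p_{α*j}(1−p_{α*j})`
      σbar = Real.sqrt ((1 / (n : ℝ)) * ∑ j,
          (Real.log ((P k (z j) * (1 - P ℓ (z j))) / (P ℓ (z j) * (1 - P k (z j))))) ^ 2 *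
            tiltedBern αs (P k (z j)) (P ℓ (z j)) *
            (1 - tiltedBern αs (P k (z j)) (P ℓ (z j)))) →
      (n : ℝ) * pstar ≤
          C₂ * (chernoffBern (fun j => P k (z j)) (fun j => P ℓ (z j))) ^ 2 →
      C₁ ≤ Real.sqrt (n : ℝ) * σbar * αs * (1 - αs) :=
  stmt_18_general β ε ω Kstar hε hω C₁ hC₁
end

section
/- Let p_{kj}, p_{ℓj} ∈ (0,1) for j ∈ [n] satisfy max_j max(p_{kj}, p_{ℓj}) = p* ≤ 1 − ε for a constant ε ∈ (0,1). Then there exists a constant C_ε depending only on ε such that for every α ∈ [0,1], the Chernoff α-divergence of the corresponding product Bernoulli distributions satisfies D_α(p_{k*}‖p_{ℓ*}) = ∑_{j=1}^n −log[ p_{kj}^{1−α} p_{ℓj}^α + (1−p_{kj})^{1−α}(1−p_{ℓj})^α ] ≤ C_ε n p*. In particular the Chernoff information D*(p_{k*}‖p_{ℓ*}) = sup_{α∈(0,1)} D_α(p_{k*}‖p_{ℓ*}) is at most C_ε n p*. -/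
open Finset

/-!
Each factor of the product is controlled by its "both failures" term alone: with all parameters
at most `p*`, the Chernoff coefficient `p^(1-α) q^α + (1-p)^(1-α) (1-q)^α` is at least
`(1-p*)^(1-α) (1-p*)^α = 1 - p*`. Hence each summand of `D_α` is at most
`-log (1 - p*) ≤ p* / (1 - p*) ≤ p* / ε`, and summing gives `D_α ≤ ε⁻¹ n p*` uniformly in `α`.
-/

/-- The Chernoff coefficient of `Bern(p)` and `Bern(q)`; `D_α` is the sum of `-log` of these. -/
noncomputable def bernoulliChernoffCoeff (p q α : ℝ) : ℝ :=
  p ^ (1 - α) * q ^ α + (1 - p) ^ (1 - α) * (1 - q) ^ α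

lemma one_sub_le_bernoulliChernoffCoeff {p q s α : ℝ} (hp : 0 ≤ p) (hq : 0 ≤ q)
    (hps : p ≤ s) (hqs : q ≤ s) (hs : s < 1) (hα : α ∈ Set.Icc (0 : ℝ) 1) :
    1 - s ≤ bernoulliChernoffCoeff p q α := by
  obtain ⟨hα₀, hα₁⟩ := hα
  have hs' : 0 < 1 - s := by linarith
  calc 1 - s = (1 - s) ^ (1 - α) * (1 - s) ^ α := by
        rw [← Real.rpow_add hs', sub_add_cancel, Real.rpow_one]
    _ ≤ (1 - p) ^ (1 - α) * (1 - q) ^ α := by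
        have hp' : 1 - s ≤ 1 - p := by linarith
        have hq' : 1 - s ≤ 1 - q := by linarith
        exact mul_le_mul (Real.rpow_le_rpow hs'.le hp' (by linarith))
          (Real.rpow_le_rpow hs'.le hq' hα₀) (by positivity) (Real.rpow_nonneg (by linarith) _)
    _ ≤ bernoulliChernoffCoeff p q α := le_add_of_nonneg_left (by positivity)

lemma neg_log_one_sub_le {s : ℝ} (hs : s < 1) : -Real.log (1 - s) ≤ s / (1 - s) := by
  have hs' : 0 < 1 - s := by linarith
  have h := Real.one_sub_inv_le_log_of_pos hs'
  have hid : s / (1 - s) = (1 - s)⁻¹ - 1 := by field_simp; ring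
  linarith

lemma neg_log_bernoulliChernoffCoeff_le {p q s α : ℝ} (hp : 0 ≤ p) (hq : 0 ≤ q)
    (hps : p ≤ s) (hqs : q ≤ s) (hs : s < 1) (hα : α ∈ Set.Icc (0 : ℝ) 1) :
    -Real.log (bernoulliChernoffCoeff p q α) ≤ s / (1 - s) :=
  calc -Real.log (bernoulliChernoffCoeff p q α) ≤ -Real.log (1 - s) :=
        neg_le_neg <| Real.log_le_log (by linarith)
          (one_sub_le_bernoulliChernoffCoeff hp hq hps hqs hs hα)
    _ ≤ s / (1 - s) := neg_log_one_sub_le hs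

lemma sum_neg_log_bernoulliChernoffCoeff_le {ι : Type*} [Fintype ι] {p q : ι → ℝ} {s α : ℝ}
    (hp : ∀ j, 0 ≤ p j) (hq : ∀ j, 0 ≤ q j) (hps : ∀ j, p j ≤ s) (hqs : ∀ j, q j ≤ s)
    (hs : s < 1) (hα : α ∈ Set.Icc (0 : ℝ) 1) :
    ∑ j, -Real.log (bernoulliChernoffCoeff (p j) (q j) α) ≤ Fintype.card ι * (s / (1 - s)) := by
  calc ∑ j, -Real.log (bernoulliChernoffCoeff (p j) (q j) α) ≤ ∑ _j : ι, s / (1 - s) :=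
        sum_le_sum fun j _ ↦
          neg_log_bernoulliChernoffCoeff_le (hp j) (hq j) (hps j) (hqs j) hs hα
    _ = Fintype.card ι * (s / (1 - s)) := by
        rw [sum_const, card_univ, nsmul_eq_mul]

/-- **Chernoff information is at most of order `n p*`** (Lemma 12).
If all Bernoulli parameters are at most `p* ≤ 1 − ε`, then for every `α ∈ [0,1]` the
Chernoff α-divergence of the product Bernoulli distributions is at most `C_ε n p*`, and
hence so is the Chernoff information. -/
theorem stmt_19 (ε : ℝ) (hε : ε ∈ Set.Ioo (0 : ℝ) 1) :
    ∃ C : ℝ, 0 < C ∧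
      ∀ (n : ℕ) (p q : Fin n → ℝ) (pstar : ℝ),
        (∀ j, p j ∈ Set.Ioo (0 : ℝ) 1) → (∀ j, q j ∈ Set.Ioo (0 : ℝ) 1) →
        IsGreatest (Set.range p ∪ Set.range q) pstar →
        pstar ≤ 1 - ε →
        (∀ α ∈ Set.Icc (0 : ℝ) 1,
          (∑ j, -Real.log (p j ^ (1 - α) * q j ^ α +
              (1 - p j) ^ (1 - α) * (1 - q j) ^ α)) ≤ C * n * pstar) ∧
        sSup ((fun α : ℝ => ∑ j, -Real.log (p j ^ (1 - α) * q j ^ α +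
            (1 - p j) ^ (1 - α) * (1 - q j) ^ α)) '' Set.Ioo 0 1) ≤ C * n * pstar := by
  obtain ⟨hε₀, -⟩ := hε
  refine ⟨ε⁻¹, inv_pos.mpr hε₀, fun n p q pstar hp hq hmax hpstar ↦ ?_⟩
  have hps : ∀ j, p j ≤ pstar := fun j ↦ hmax.2 (Or.inl ⟨j, rfl⟩)
  have hqs : ∀ j, q j ≤ pstar := fun j ↦ hmax.2 (Or.inr ⟨j, rfl⟩)
  have hpstar₀ : 0 ≤ pstar := by
    rcases hmax.1 with ⟨j, rfl⟩ | ⟨j, rfl⟩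
    exacts [(hp j).1.le, (hq j).1.le]
  have hratio : pstar / (1 - pstar) ≤ ε⁻¹ * pstar := by
    rw [div_eq_inv_mul]
    gcongr
    linarith
  have hbound : ∀ α ∈ Set.Icc (0 : ℝ) 1,
      ∑ j, -Real.log (bernoulliChernoffCoeff (p j) (q j) α) ≤ ε⁻¹ * n * pstar := by
    intro α hα
    calc ∑ j, -Real.log (bernoulliChernoffCoeff (p j) (q j) α)
        ≤ Fintype.card (Fin n) * (pstar / (1 - pstar)) :=
          sum_neg_log_bernoulliChernoffCoeff_le (fun j ↦ (hp j).1.le) (fun j ↦ (hq j).1.le)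
            hps hqs (by linarith) hα
      _ ≤ n * (ε⁻¹ * pstar) := by rw [Fintype.card_fin]; gcongr
      _ = ε⁻¹ * n * pstar := by ring
  refine ⟨hbound, Real.sSup_le ?_ (by positivity)⟩
  rintro _ ⟨α, hα, rfl⟩
  exact hbound α (Set.Ioo_subset_Icc_self hα)
end
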